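/- Assume the compatibility condition Π_L Π_G = Π_G Π_L and that R is continuously differentiable with locally Lipschitz gradient. If A : [0,∞) → L is a differentiable curve satisfying the augmented gradient-flow equation A'(t) = −Π_L ∇R^aug(A(t)) for all t ≥ 0 and A(0) ∈ E, then A(t) ∈ E for all t ≥ 0; that is, the equivariant subspace E is an invariant set of the augmented dynamics. -/

import Mathlib

open MeasureTheory InnerProductSpace RealInnerProductSpace

noncomputable section

/-- The fixed-point subspace `H_G = {v : ρ(g) v = v for all g}` of an orthogonal
representation `ρ : G → O(V)`. -/
def fixedSubmodule {G V : Type*} [Group G] [NormedAddCommGroup V] [InnerProductSpace ℝ V]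
    (ρ : G →* (V ≃ₗᵢ[ℝ] V)) : Submodule ℝ V where
  carrier := {v | ∀ g : G, ρ g v = v}
  add_mem' := by
    intro a b ha hb g
    simp [map_add, ha g, hb g]
  zero_mem' := by
    intro g
    simp
  smul_mem' := by
    intro c a ha g
    rw [_root_.map_smul, ha g]

/-- The orthogonal projection onto a subspace `K`, as a map `V → V`. -/
def projSub {V : Type*} [NormedAddCommGroup V] [InnerProductSpace ℝ V] (K : Submodule ℝ V)
    [K.HasOrthogonalProjection] : V →L[ℝ] V :=
  K.subtypeL.comp (K.orthogonalProjectionOnto)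

/-- The augmented risk `R^aug(A) = ∫_G R(ρ(g) A) dμ(g)`. -/
def augRisk {G V : Type*} [Group G] [MeasurableSpace G]
    [NormedAddCommGroup V] [InnerProductSpace ℝ V]
    (μ : Measure G) (ρ : G →* (V ≃ₗᵢ[ℝ] V)) (R : V → ℝ) : V → ℝ :=
  fun A => ∫ g, R (ρ g A) ∂μ

/-- The Hessian of `f : V → ℝ` at `A`, regarded as a linear map `V → V`
(the derivative of the gradient field). -/
def hess {V : Type*} [NormedAddCommGroup V] [InnerProductSpace ℝ V] [CompleteSpace V]
    (f : V → ℝ) (A : V) : V →L[ℝ] V :=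
  fderiv ℝ (gradient f) A

/-!
Differentiating under the integral sign gives `∇R^aug(v) = ∫ ρ(g)⁻¹ ∇R(ρ(g) v) dμ(g)`. By
invariance of the Haar measure this field is `G`-equivariant, so it maps `H_G` into itself, and it
is locally Lipschitz because `∇R` is Lipschitz on the (compact) `G`-orbit of a ball. As `Π_L`
commutes with `Π_G`, it preserves `H_G`; hence the vector field `-Π_L ∇R^aug` is locally Lipschitz
and maps `E = H_G ∩ L` into itself. For such a field the component `w` of a trajectory orthogonal
to `E` satisfies `‖w'‖ ≤ K ‖w‖` and `w(0) = 0`, so `w` vanishes by Grönwall's inequality.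
-/

open scoped NNReal

lemma projSub_eq_starProjection {V : Type*} [NormedAddCommGroup V] [InnerProductSpace ℝ V]
    (K : Submodule ℝ V) [K.HasOrthogonalProjection] : projSub K = K.starProjection := rfl

lemma Submodule.starProjection_apply_mem_of_comm {𝕜 V : Type*} [RCLike 𝕜]
    [NormedAddCommGroup V] [InnerProductSpace 𝕜 V] {K L : Submodule 𝕜 V}
    [K.HasOrthogonalProjection] [L.HasOrthogonalProjection]
    (h : L.starProjection.comp K.starProjection = K.starProjection.comp L.starProjection)
    {v : V} (hv : v ∈ K) : L.starProjection v ∈ K := by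
  rw [← K.starProjection_eq_self_iff.2 hv, ← ContinuousLinearMap.comp_apply, h]
  exact K.starProjection_apply_mem _

section Invariance

variable {V : Type*} [NormedAddCommGroup V] [InnerProductSpace ℝ V]
  {E : Submodule ℝ V} [E.HasOrthogonalProjection] {f : V → V}

lemma LipschitzOnWith.norm_starProjection_orthogonal_le {K : ℝ≥0} {s : Set V}
    (hf : LipschitzOnWith K f s) (hfE : Set.MapsTo f E E) {x : V} (hx : x ∈ s)
    (hPx : E.starProjection x ∈ s) :
    ‖Eᗮ.starProjection (f x)‖ ≤ K * ‖Eᗮ.starProjection x‖ := by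
  have hPfPx : Eᗮ.starProjection (f (E.starProjection x)) = 0 :=
    Submodule.starProjection_orthogonal_apply_eq_zero (hfE (E.starProjection_apply_mem x))
  calc ‖Eᗮ.starProjection (f x)‖ = ‖Eᗮ.starProjection (f x - f (E.starProjection x))‖ := by
        rw [map_sub, hPfPx, sub_zero]
    _ ≤ ‖f x - f (E.starProjection x)‖ := Eᗮ.norm_starProjection_apply_le _
    _ ≤ K * ‖x - E.starProjection x‖ := by
        simpa only [dist_eq_norm] using hf.dist_le_mul x hx _ hPx
    _ = K * ‖Eᗮ.starProjection x‖ := by rw [Submodule.starProjection_orthogonal_val]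

theorem LocallyLipschitz.mem_of_hasDerivWithinAt_of_mapsTo (hf : LocallyLipschitz f)
    (hfE : Set.MapsTo f E E) {A : ℝ → V}
    (hA : ∀ t, 0 ≤ t → HasDerivWithinAt A (f (A t)) (Set.Ici 0) t) (hA₀ : A 0 ∈ E)
    {T : ℝ} (hT : 0 ≤ T) : A T ∈ E := by
  have hAc : ContinuousOn A (Set.Icc 0 T) := fun t ht =>
    (hA t ht.1).continuousWithinAt.mono Set.Icc_subset_Ici_self
  have hcpt : IsCompact (A '' Set.Icc 0 T ∪ E.starProjection '' (A '' Set.Icc 0 T)) :=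
    have h := isCompact_Icc.image_of_continuousOn hAc
    h.union (h.image E.starProjection.continuous)
  obtain ⟨K, hK⟩ := (hf.locallyLipschitzOn).exists_lipschitzOnWith_of_compact hcpt
  have horth := eq_zero_of_abs_deriv_le_mul_abs_self_of_eq_zero_right
    (f := fun t => Eᗮ.starProjection (A t)) (K := K)
    (Eᗮ.starProjection.continuous.comp_continuousOn hAc)
    (fun t ht => Eᗮ.starProjection.hasFDerivAt.comp_hasDerivWithinAt t
      ((hA t ht.1).mono (Set.Ici_subset_Ici.2 ht.1)))
    (Submodule.starProjection_orthogonal_apply_eq_zero hA₀)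
    (fun t ht => hK.norm_starProjection_orthogonal_le hfE
      (Or.inl ⟨t, Set.Ico_subset_Icc_self ht, rfl⟩)
      (Or.inr ⟨A t, ⟨t, Set.Ico_subset_Icc_self ht, rfl⟩, rfl⟩))
    T ⟨hT, le_rfl⟩
  rwa [Submodule.starProjection_apply_eq_zero_iff, Submodule.orthogonal_orthogonal] at horth

end Invariance

lemma HasGradientAt.comp_linearIsometryEquiv {V : Type*} [NormedAddCommGroup V]
    [InnerProductSpace ℝ V] [CompleteSpace V] {f : V → ℝ} {w x : V} (e : V ≃ₗᵢ[ℝ] V)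
    (h : HasGradientAt f w (e x)) : HasGradientAt (f ∘ e) (e.symm w) x := by
  rw [hasGradientAt_iff_hasFDerivAt] at h ⊢
  refine (h.comp x e.toContinuousLinearEquiv.hasFDerivAt).congr_fderiv ?_
  ext y
  simp [toDual_apply_apply, LinearIsometryEquiv.inner_map_eq_flip]

lemma MeasureTheory.Measure.isMulRightInvariant_of_isProbabilityMeasure {G : Type*} [Group G]
    [TopologicalSpace G] [IsTopologicalGroup G] [LocallyCompactSpace G] [MeasurableSpace G]
    [BorelSpace G] (μ : Measure G) [μ.IsHaarMeasure] [IsProbabilityMeasure μ] :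
    μ.IsMulRightInvariant where
  map_mul_right_eq_self g :=
    haveI := Measure.isProbabilityMeasure_map (μ := μ) (measurable_mul_const g).aemeasurable
    Measure.isHaarMeasure_eq_of_isProbabilityMeasure _ _

section AugmentedRisk

variable {G V : Type*} [Group G] [MeasurableSpace G]
  [NormedAddCommGroup V] [InnerProductSpace ℝ V] [CompleteSpace V]
  {μ : Measure G} {ρ : G →* (V ≃ₗᵢ[ℝ] V)} {R : V → ℝ}

def avgGradient (μ : Measure G) (ρ : G →* (V ≃ₗᵢ[ℝ] V)) (R : V → ℝ) (v : V) : V :=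
  ∫ g, ρ g⁻¹ (gradient R (ρ g v)) ∂μ

lemma avgGradient_map [μ.IsMulRightInvariant] [MeasurableMul G] (h : G) (v : V) :
    avgGradient μ ρ R (ρ h v) = ρ h (avgGradient μ ρ R v) := by
  calc ∫ g, ρ g⁻¹ (gradient R (ρ g (ρ h v))) ∂μ
      = ∫ g, ρ h (ρ (g * h)⁻¹ (gradient R (ρ (g * h) v))) ∂μ := by
        congr 1 with g
        simp [mul_inv_rev, map_mul]
    _ = ∫ g, ρ h (ρ g⁻¹ (gradient R (ρ g v))) ∂μ :=
        integral_mul_right_eq_self (fun g => ρ h (ρ g⁻¹ (gradient R (ρ g v)))) h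
    _ = ρ h (∫ g, ρ g⁻¹ (gradient R (ρ g v)) ∂μ) := (ρ h).toLinearIsometry.integral_comp_comm _

lemma avgGradient_mem_fixedSubmodule [μ.IsMulRightInvariant] [MeasurableMul G] {v : V}
    (hv : v ∈ fixedSubmodule ρ) : avgGradient μ ρ R v ∈ fixedSubmodule ρ := fun h => by
  rw [← avgGradient_map, hv h]

end AugmentedRisk

section Analytic

variable {G V : Type*} [Group G] [TopologicalSpace G] [NormedAddCommGroup V]
  [InnerProductSpace ℝ V] {ρ : G →* (V ≃ₗᵢ[ℝ] V)} {R : V → ℝ}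

lemma continuous_avgGradient_integrand [IsTopologicalGroup G] [CompleteSpace V]
    (hρ : Continuous fun p : G × V => ρ p.1 p.2) (hgrad : Continuous (gradient R)) (v : V) :
    Continuous fun g => ρ g⁻¹ (gradient R (ρ g v)) :=
  hρ.comp (continuous_inv.prodMk (hgrad.comp (hρ.comp (continuous_id.prodMk continuous_const))))

lemma isCompact_image_action [CompactSpace G] (hρ : Continuous fun p : G × V => ρ p.1 p.2)
    {s : Set V} (hs : IsCompact s) : IsCompact ((fun p : G × V => ρ p.1 p.2) '' (Set.univ ×ˢ s)) :=
  (isCompact_univ.prod hs).image hρ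

variable [IsTopologicalGroup G] [CompactSpace G] [MeasurableSpace G] [BorelSpace G]
  {μ : Measure G}

lemma integrable_avgGradient_integrand [CompleteSpace V] [IsFiniteMeasure μ]
    (hρ : Continuous fun p : G × V => ρ p.1 p.2) (hgrad : Continuous (gradient R)) (v : V) :
    Integrable (fun g => ρ g⁻¹ (gradient R (ρ g v))) μ :=
  (continuous_avgGradient_integrand hρ hgrad v).integrable_of_hasCompactSupport
    (.of_compactSpace _)

theorem hasGradientAt_augRisk [ProperSpace V] [IsFiniteMeasure μ]
    (hρ : Continuous fun p : G × V => ρ p.1 p.2) (hR : Differentiable ℝ R)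
    (hgrad : Continuous (gradient R)) (v : V) :
    HasGradientAt (augRisk μ ρ R) (avgGradient μ ρ R v) v := by
  obtain ⟨C, hC⟩ := (isCompact_image_action hρ
    (isCompact_closedBall v 1)).exists_bound_of_continuousOn hgrad.continuousOn
  have hRρ : ∀ x, Continuous fun g => R (ρ g x) := fun x =>
    hR.continuous.comp (hρ.comp (continuous_id.prodMk continuous_const))
  have hderiv : ∀ g x,
      HasFDerivAt (fun y => R (ρ g y)) (toDual ℝ V (ρ g⁻¹ (gradient R (ρ g x)))) x := fun g x => by
    rw [← hasGradientAt_iff_hasFDerivAt, map_inv]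
    exact (hR (ρ g x)).hasGradientAt.comp_linearIsometryEquiv (ρ g)
  have hderiv_integral := hasFDerivAt_integral_of_dominated_of_fderiv_le (μ := μ)
    (F' := fun x g => toDual ℝ V (ρ g⁻¹ (gradient R (ρ g x)))) (bound := fun _ => C)
    (Metric.closedBall_mem_nhds v one_pos)
    (.of_forall fun x => (hRρ x).aestronglyMeasurable_of_compactSpace)
    ((hRρ v).integrable_of_hasCompactSupport (.of_compactSpace _))
    ((toDual ℝ V).continuous.comp
      (continuous_avgGradient_integrand hρ hgrad v)).aestronglyMeasurable_of_compactSpace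
    (.of_forall fun g x hx => by
      rw [LinearIsometryEquiv.norm_map, LinearIsometryEquiv.norm_map]
      exact hC _ ⟨(g, x), ⟨trivial, hx⟩, rfl⟩)
    (integrable_const C) (.of_forall fun g x _ => hderiv g x)
  have hdual : ∫ g, toDual ℝ V (ρ g⁻¹ (gradient R (ρ g v))) ∂μ =
      toDual ℝ V (avgGradient μ ρ R v) :=
    (toDual ℝ V).toLinearIsometry.integral_comp_comm _
  rwa [hdual, ← hasGradientAt_iff_hasFDerivAt] at hderiv_integral

lemma gradient_augRisk [ProperSpace V] [IsFiniteMeasure μ]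
    (hρ : Continuous fun p : G × V => ρ p.1 p.2) (hR : Differentiable ℝ R)
    (hgrad : Continuous (gradient R)) :
    gradient (augRisk μ ρ R) = avgGradient μ ρ R :=
  funext fun v => (hasGradientAt_augRisk hρ hR hgrad v).gradient

lemma lipschitzOnWith_avgGradient [CompleteSpace V] [IsProbabilityMeasure μ]
    (hρ : Continuous fun p : G × V => ρ p.1 p.2) (hgrad : Continuous (gradient R))
    {K : ℝ≥0} {s t : Set V} (hK : LipschitzOnWith K (gradient R) t)
    (hst : ∀ g, Set.MapsTo (ρ g) s t) : LipschitzOnWith K (avgGradient μ ρ R) s := by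
  refine LipschitzOnWith.of_dist_le_mul fun x hx y hy => ?_
  rw [dist_eq_norm, avgGradient, avgGradient, ← integral_sub
    (integrable_avgGradient_integrand hρ hgrad x) (integrable_avgGradient_integrand hρ hgrad y)]
  refine (norm_integral_le_of_norm_le_const (C := K * dist x y) (.of_forall fun g => ?_)).trans
    (by simp)
  rw [← map_sub, LinearIsometryEquiv.norm_map, ← dist_eq_norm, ← (ρ g).dist_map x y]
  exact hK.dist_le_mul _ (hst g hx) _ (hst g hy)

lemma LocallyLipschitz.avgGradient [ProperSpace V] [IsProbabilityMeasure μ]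
    (hρ : Continuous fun p : G × V => ρ p.1 p.2) (hlip : LocallyLipschitz (gradient R)) :
    LocallyLipschitz (avgGradient μ ρ R) := fun v => by
  obtain ⟨K, hK⟩ := hlip.locallyLipschitzOn.exists_lipschitzOnWith_of_compact
    (isCompact_image_action hρ (isCompact_closedBall v 1))
  exact ⟨K, _, Metric.closedBall_mem_nhds v one_pos,
    lipschitzOnWith_avgGradient hρ hlip.continuous hK fun g x hx => ⟨(g, x), ⟨trivial, hx⟩, rfl⟩⟩

end Analytic

theorem equivariant_subspace_invariant_general
    {G V : Type*} [Group G] [TopologicalSpace G] [IsTopologicalGroup G] [CompactSpace G]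
    [MeasurableSpace G] [BorelSpace G]
    [NormedAddCommGroup V] [InnerProductSpace ℝ V] [FiniteDimensional ℝ V]
    (μ : Measure G) [μ.IsHaarMeasure] [IsProbabilityMeasure μ]
    (ρ : G →* (V ≃ₗᵢ[ℝ] V)) (hρ : Continuous fun p : G × V => ρ p.1 p.2)
    (L : Submodule ℝ V)
    (hcompat : (projSub L).comp (projSub (fixedSubmodule ρ)) =
      (projSub (fixedSubmodule ρ)).comp (projSub L))
    (R : V → ℝ) (hR : ContDiff ℝ 1 R) (hlip : LocallyLipschitz (gradient R))
    (A : ℝ → V)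
    (hode : ∀ t : ℝ, 0 ≤ t →
      HasDerivAt A (-(projSub L (gradient (augRisk μ ρ R) (A t)))) t)
    (h0 : A 0 ∈ fixedSubmodule ρ ⊓ L) :
    ∀ t : ℝ, 0 ≤ t → A t ∈ fixedSubmodule ρ ⊓ L := by
  have := Measure.isMulRightInvariant_of_isProbabilityMeasure μ
  simp only [projSub_eq_starProjection] at hode hcompat
  rw [gradient_augRisk hρ (hR.differentiable one_ne_zero) hlip.continuous] at hode
  have hflow : LocallyLipschitz fun v => -L.starProjection (avgGradient μ ρ R v) :=
    (L.starProjection.lipschitz.locallyLipschitz.comp (hlip.avgGradient hρ)).neg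
  have hmaps : Set.MapsTo (fun v => -L.starProjection (avgGradient μ ρ R v))
      (fixedSubmodule ρ ⊓ L) (fixedSubmodule ρ ⊓ L) := fun v hv =>
    neg_mem (Submodule.mem_inf.2
      ⟨Submodule.starProjection_apply_mem_of_comm hcompat
        (avgGradient_mem_fixedSubmodule (Submodule.mem_inf.1 hv).1),
       L.starProjection_apply_mem _⟩)
  exact fun t ht => hflow.mem_of_hasDerivWithinAt_of_mapsTo hmaps
    (fun s hs => (hode s hs).hasDerivWithinAt) h0 ht

/-- Under the compatibility condition, the equivariant subspace
`E = H_G ⊓ L` is an invariant set of the augmented gradient-flow dynamics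
`A' = -Π_L ∇R^aug(A)`. -/
theorem equivariant_subspace_invariant
    {G V : Type*} [Group G] [TopologicalSpace G] [IsTopologicalGroup G] [CompactSpace G]
    [MeasurableSpace G] [BorelSpace G]
    [NormedAddCommGroup V] [InnerProductSpace ℝ V] [FiniteDimensional ℝ V]
    (μ : Measure G) [μ.IsHaarMeasure] [IsProbabilityMeasure μ]
    (ρ : G →* (V ≃ₗᵢ[ℝ] V)) (hρ : Continuous fun p : G × V => ρ p.1 p.2)
    (L : Submodule ℝ V)
    (hcompat : (projSub L).comp (projSub (fixedSubmodule ρ)) =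
      (projSub (fixedSubmodule ρ)).comp (projSub L))
    (R : V → ℝ) (hR : ContDiff ℝ 1 R) (hlip : LocallyLipschitz (gradient R))
    (A : ℝ → V)
    (hmem : ∀ t : ℝ, 0 ≤ t → A t ∈ L)
    (hode : ∀ t : ℝ, 0 ≤ t →
      HasDerivAt A (-(projSub L (gradient (augRisk μ ρ R) (A t)))) t)
    (h0 : A 0 ∈ fixedSubmodule ρ ⊓ L) :
    ∀ t : ℝ, 0 ≤ t → A t ∈ fixedSubmodule ρ ⊓ L :=
  equivariant_subspace_invariant_general μ ρ hρ L hcompat R hR hlip A hode h0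

end
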